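/- Let O be the octonions and f : O → O a real-linear map. Then Re(f(px) - p f(x)) = 0 for all p, x ∈ O if and only if there exists q ∈ O such that f(x) = x q for all x ∈ O. -/

import Mathlib

noncomputable section

open scoped Quaternion

/-- The octonions, built from pairs of quaternions via the Cayley–Dickson construction. -/
def Octonion : Type := ℍ[ℝ] × ℍ[ℝ]

namespace Octonion

def mk' (a b : ℍ[ℝ]) : Octonion := Prod.mk a b
def q1 (x : Octonion) : ℍ[ℝ] := Prod.fst x
def q2 (x : Octonion) : ℍ[ℝ] := Prod.snd x

instance : AddCommGroup Octonion := inferInstanceAs (AddCommGroup (ℍ[ℝ] × ℍ[ℝ]))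
instance : Module ℝ Octonion := inferInstanceAs (Module ℝ (ℍ[ℝ] × ℍ[ℝ]))
instance : One Octonion := ⟨mk' 1 0⟩
instance : Mul Octonion :=
  ⟨fun x y => mk' (q1 x * q1 y - star (q2 y) * q2 x) (q2 y * q1 x + q2 x * star (q1 y))⟩

/-- Octonion conjugation. -/
def conj (x : Octonion) : Octonion := mk' (star (q1 x)) (-(q2 x))

/-- The real part of an octonion. -/
def re (x : Octonion) : ℝ := (q1 x).re

/-- The standard basis `e 0 = 1, e 1, …, e 7` of the octonions. -/
def e : Fin 8 → Octonion :=
  ![mk' 1 0, mk' ⟨0,1,0,0⟩ 0, mk' ⟨0,0,1,0⟩ 0, mk' ⟨0,0,0,1⟩ 0,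
    mk' 0 1, mk' 0 ⟨0,1,0,0⟩, mk' 0 ⟨0,0,1,0⟩, mk' 0 ⟨0,0,0,1⟩]

/-- The coordinates of an octonion with respect to the standard basis. -/
def coord (x : Octonion) : Fin 8 → ℝ :=
  ![(q1 x).re, (q1 x).imI, (q1 x).imJ, (q1 x).imK,
    (q2 x).re, (q2 x).imI, (q2 x).imJ, (q2 x).imK]

end Octonion

/-! Put `q = f 1`. Taking `x = 1` in the hypothesis gives `Re (f p) = Re (p q)`, hence
`Re (p f x) = Re (f (p x)) = Re ((p x) q) = Re (p (x q))` for all `p`, because the real part of a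
triple product does not depend on the bracketing. The trace form `Re (p y)` is nondegenerate
(`p = ȳ` gives the squared norm of `y`), so `f x = x q`. -/

namespace Octonion

open Quaternion

theorem mul_def (x y : Octonion) :
    x * y = mk' (q1 x * q1 y - star (q2 y) * q2 x) (q2 y * q1 x + q2 x * star (q1 y)) := rfl

@[ext]
theorem ext {x y : Octonion} (h1 : q1 x = q1 y) (h2 : q2 x = q2 y) : x = y :=
  Prod.ext h1 h2

@[simp] theorem q1_mk (a b : ℍ[ℝ]) : q1 (mk' a b) = a := rfl
@[simp] theorem q2_mk (a b : ℍ[ℝ]) : q2 (mk' a b) = b := rfl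
@[simp] theorem q1_one : q1 1 = 1 := rfl
@[simp] theorem q2_one : q2 1 = 0 := rfl
@[simp] theorem q1_sub (x y : Octonion) : q1 (x - y) = q1 x - q1 y := rfl
@[simp] theorem q2_sub (x y : Octonion) : q2 (x - y) = q2 x - q2 y := rfl

theorem re_sub (x y : Octonion) : re (x - y) = re x - re y :=
  Quaternion.re_sub _ _

theorem mul_one (x : Octonion) : x * 1 = x := by
  ext <;> simp [mul_def]

theorem mul_sub (p x y : Octonion) : p * (x - y) = p * x - p * y := by
  ext : 1 <;>
    simp only [mul_def, q1_mk, q2_mk, q1_sub, q2_sub, _root_.mul_sub, sub_mul, star_sub] <;> abel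

theorem re_mul_assoc (x y z : Octonion) : re (x * y * z) = re (x * (y * z)) := by
  simp only [re, mul_def, q1_mk, q2_mk, Quaternion.re_sub, re_add, re_mul, imI_sub, imI_add,
    imI_mul, imJ_sub, imJ_add, imJ_mul, imK_sub, imK_add, imK_mul, re_star, imI_star, imJ_star,
    imK_star]
  ring

theorem re_conj_mul_self (x : Octonion) : re (conj x * x) = normSq (q1 x) + normSq (q2 x) := by
  simp only [re, conj, mul_def, q1_mk, q2_mk, mul_neg, sub_neg_eq_add, star_mul_self,
    ← coe_add, re_coe]

theorem eq_zero_of_forall_re_mul_eq_zero {y : Octonion} (h : ∀ p, re (p * y) = 0) : y = 0 := by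
  obtain ⟨h1, h2⟩ := (add_eq_zero_iff_of_nonneg normSq_nonneg normSq_nonneg).mp
    (re_conj_mul_self y ▸ h (conj y))
  exact ext (normSq_eq_zero.mp h1) (normSq_eq_zero.mp h2)

end Octonion

open Octonion in
/-- An `ℝ`-linear map `f : 𝕆 → 𝕆` satisfies `Re (f (p x) - p f x) = 0` for all
`p, x` if and only if it is right multiplication by some octonion `q`. -/
theorem octonion_almost_linear_iff_right_mul
    (f : Octonion →ₗ[ℝ] Octonion) :
    (∀ p x : Octonion, re (f (p * x) - p * f x) = 0)
      ↔ ∃ q : Octonion, ∀ x : Octonion, f x = x * q := by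
  constructor
  · intro h
    have hre (p x : Octonion) : re (f (p * x)) = re (p * f x) :=
      sub_eq_zero.mp (re_sub _ _ ▸ h p x)
    refine ⟨f 1, fun x => sub_eq_zero.mp (eq_zero_of_forall_re_mul_eq_zero fun p => ?_)⟩
    calc re (p * (f x - x * f 1))
        = re (p * f x) - re (p * (x * f 1)) := by rw [mul_sub, re_sub]
      _ = re (f (p * x)) - re (p * x * f 1) := by rw [hre, re_mul_assoc]
      _ = 0 := by rw [← hre (p * x) 1, mul_one, sub_self]
  · rintro ⟨q, hq⟩ p x
    rw [hq, hq, re_sub, re_mul_assoc, sub_self]
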